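/- arXiv:1711.08578 — 2 statements merged into one kernel-verified Lean document; each statement's English description precedes it below -/
import Mathlib

section
/- Let W = 8·∏_{2 < p ≤ w} p be eight times the product of all odd primes up to some bound w ≥ 3. For any integer N ≡ 5 (mod 24), there exist integers b₁, ..., b₅ with 1 ≤ bᵢ ≤ W, gcd(bᵢ, W) = 1, each bᵢ a quadratic residue modulo W (i.e., there exists x coprime to W with x² ≡ bᵢ (mod W)), such that N ≡ b₁ + b₂ + b₃ + b₄ + b₅ (mod W). -/
/-!
It suffices that `N` is a sum of five squares of units in `ZMod W`, and by the Chinese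
remainder theorem `ZMod W ≅ ZMod 24 × ∏ ZMod p` over the primes `5 ≤ p ≤ w`.
Modulo 24, `N ≡ 5 = 1 + 1 + 1 + 1 + 1`. Modulo `p`, the set `S` of nonzero squares has
`(p - 1) / 2` elements, so by Cauchy–Davenport the five-fold sumset `5 • S` has at least
`min p (5 (#S - 1) + 1) = p` elements: it is all of `ZMod p`.
The `bᵢ` are the representatives in `[1, W]` of the squared units.
-/

open Finset Pointwise

def IsSumOfUnitSquares {R : Type*} [CommRing R] (k : ℕ) (x : R) : Prop :=
  ∃ u : Fin k → Rˣ, ∑ i, (u i : R) ^ 2 = x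

namespace IsSumOfUnitSquares

variable {R S : Type*} [CommRing R] [CommRing S] {k : ℕ}

lemma add_sq {x : R} (hx : IsSumOfUnitSquares k x) (v : Rˣ) :
    IsSumOfUnitSquares (k + 1) (x + v ^ 2) := by
  obtain ⟨u, rfl⟩ := hx
  exact ⟨Fin.snoc u v, by simp [Fin.sum_univ_castSucc]⟩

lemma map {x : R} (hx : IsSumOfUnitSquares k x) (f : R →+* S) :
    IsSumOfUnitSquares k (f x) := by
  obtain ⟨u, rfl⟩ := hx
  exact ⟨fun i => Units.map f (u i), by simp⟩

lemma prodMk {x : R} {y : S} (hx : IsSumOfUnitSquares k x) (hy : IsSumOfUnitSquares k y) :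
    IsSumOfUnitSquares k (x, y) := by
  obtain ⟨u, rfl⟩ := hx
  obtain ⟨v, rfl⟩ := hy
  exact ⟨fun i => MulEquiv.prodUnits.symm (u i, v i), by
    ext <;> simp only [Prod.fst_sum, Prod.snd_sum, Prod.pow_fst, Prod.pow_snd] <;> rfl⟩

end IsSumOfUnitSquares

lemma card_units_le_two_mul_card_image_sq {R : Type*} [CommRing R] [NoZeroDivisors R] [Fintype R]
    [DecidableEq R] : Fintype.card Rˣ ≤ 2 * #(univ.image fun u : Rˣ => (u : R) ^ 2) := by
  refine card_le_mul_card_image _ 2 fun a ha => ?_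
  obtain ⟨u, -, rfl⟩ := mem_image.mp ha
  calc #{v : Rˣ | (v : R) ^ 2 = (u : R) ^ 2} ≤ #{u, -u} := card_le_card fun v hv => by
        rcases sq_eq_sq_iff_eq_or_eq_neg.mp (mem_filter.mp hv).2 with h | h
        · simp [Units.ext h]
        · simp [Units.ext (h.trans (Units.val_neg u).symm)]
    _ ≤ 2 := card_le_two

lemma ZMod.min_le_card_nsmul {p : ℕ} (hp : p.Prime) {s : Finset (ZMod p)} (hs : s.Nonempty)
    (k : ℕ) : min p (k * (#s - 1) + 1) ≤ #(k • s) := by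
  induction k with
  | zero =>
    rw [zero_nsmul, zero_mul, zero_add]
    exact (min_le_right _ _).trans (by simp)
  | succ k ih =>
    have hcd := ZMod.cauchy_davenport hp (hs.nsmul (n := k)) hs
    rw [succ_nsmul]
    have : 1 ≤ #s := hs.card_pos
    rw [add_mul, one_mul]
    omega

lemma ZMod.isSumOfUnitSquares_of_mem_nsmul {p k : ℕ} [NeZero p] {x : ZMod p}
    (hx : x ∈ k • univ.image fun u : (ZMod p)ˣ => (u : ZMod p) ^ 2) :
    IsSumOfUnitSquares k x := by
  induction k generalizing x with
  | zero =>
    rw [zero_nsmul, mem_zero] at hx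
    exact ⟨Fin.elim0, by simp [hx]⟩
  | succ k ih =>
    rw [succ_nsmul] at hx
    obtain ⟨y, hy, _, hv, rfl⟩ := mem_add.mp hx
    obtain ⟨v, -, rfl⟩ := mem_image.mp hv
    exact (ih hy).add_sq v

lemma ZMod.isSumOfUnitSquares_five {p : ℕ} [hp : Fact p.Prime] (hp5 : 5 ≤ p) (c : ZMod p) :
    IsSumOfUnitSquares 5 c := by
  set S := univ.image fun u : (ZMod p)ˣ => (u : ZMod p) ^ 2
  have hS : p - 1 ≤ 2 * #S := ZMod.card_units p ▸ card_units_le_two_mul_card_image_sq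
  have hcd := ZMod.min_le_card_nsmul (s := S) hp.out
    ⟨1, mem_image.mpr ⟨1, mem_univ _, one_pow 2⟩⟩ 5
  have huniv : 5 • S = univ := eq_univ_of_card _ <| by
    have := card_le_univ (5 • S)
    rw [ZMod.card] at this ⊢
    omega
  exact ZMod.isSumOfUnitSquares_of_mem_nsmul (huniv ▸ mem_univ c)

lemma ZMod.isSumOfUnitSquares_intCast_mul {m n k : ℕ} (hmn : m.Coprime n) {c : ℤ}
    (hm : IsSumOfUnitSquares k (c : ZMod m)) (hn : IsSumOfUnitSquares k (c : ZMod n)) :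
    IsSumOfUnitSquares k (c : ZMod (m * n)) := by
  have hc : ((c : ZMod m), (c : ZMod n)) = ZMod.chineseRemainder hmn c := (map_intCast _ c).symm
  simpa [hc] using (hm.prodMk hn).map (ZMod.chineseRemainder hmn).symm.toRingHom

lemma isSumOfUnitSquares_intCast_mul_prod_primes {M k : ℕ} {c : ℤ}
    (hM : IsSumOfUnitSquares k (c : ZMod M)) (s : Finset ℕ) (hprime : ∀ p ∈ s, p.Prime)
    (hcop : ∀ p ∈ s, M.Coprime p) (hs : ∀ p ∈ s, IsSumOfUnitSquares k (c : ZMod p)) :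
    IsSumOfUnitSquares k (c : ZMod (M * ∏ p ∈ s, p)) := by
  induction s using Finset.induction_on with
  | empty =>
    rw [prod_empty, mul_one]
    exact hM
  | insert p s hps ih =>
    simp only [mem_insert, forall_eq_or_imp] at hprime hcop hs
    have hp_cop : (M * ∏ q ∈ s, q).Coprime p :=
      hcop.1.mul_left <| Nat.Coprime.prod_left fun q hq =>
        (Nat.coprime_primes (hprime.2 q hq) hprime.1).mpr (ne_of_mem_of_not_mem hq hps)
    rw [prod_insert hps, ← mul_assoc, mul_right_comm]
    exact ZMod.isSumOfUnitSquares_intCast_mul hp_cop (ih hprime.2 hcop.2 hs.2) hs.1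

lemma Nat.Prime.coprime_twentyFour {p : ℕ} (hp : p.Prime) (hp5 : 5 ≤ p) : Nat.Coprime 24 p :=
  ((Nat.coprime_primes Nat.prime_two hp).mpr (by omega)).pow_left 3 |>.mul_left
    ((Nat.coprime_primes Nat.prime_three hp).mpr (by omega))

lemma ZMod.val_unit_sq_spec {W : ℕ} (hW : 1 < W) (u : (ZMod W)ˣ) :
    1 ≤ ((u : ZMod W) ^ 2).val ∧ ((u : ZMod W) ^ 2).val ≤ W ∧
      Nat.gcd ((u : ZMod W) ^ 2).val W = 1 ∧
      ∃ x : ℕ, Nat.gcd x W = 1 ∧ x ^ 2 ≡ ((u : ZMod W) ^ 2).val [MOD W] := by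
  have : NeZero W := ⟨by omega⟩
  have hcop : ((u : ZMod W) ^ 2).val.Coprime W := by
    rw [← Units.val_pow_eq_pow_val]
    exact ZMod.val_coe_unit_coprime (u ^ 2)
  refine ⟨Nat.pos_of_ne_zero fun h => hW.ne' (Nat.coprime_zero_left W |>.mp (h ▸ hcop)),
    (ZMod.val_lt _).le, hcop, (u : ZMod W).val, ZMod.val_coe_unit_coprime u, ?_⟩
  rw [← ZMod.natCast_eq_natCast_iff]
  simp

theorem five_qr_decomposition_mod_W (w : ℕ) (hw : 3 ≤ w)
    (W : ℕ)
    (hW : W = 8 * ∏ p ∈ (Finset.range (w + 1)).filter (fun p => p.Prime ∧ Odd p), p)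
    (N : ℤ) (hN : N ≡ 5 [ZMOD 24]) :
    ∃ b : Fin 5 → ℕ,
      (∀ i, 1 ≤ b i ∧ b i ≤ W ∧ Nat.gcd (b i) W = 1 ∧
        ∃ x : ℕ, Nat.gcd x W = 1 ∧ x ^ 2 ≡ b i [MOD W]) ∧
      N ≡ (↑(b 0 + b 1 + b 2 + b 3 + b 4)) [ZMOD W] := by
  set s := (Finset.range (w + 1)).filter (fun p => p.Prime ∧ Odd p)
  have h3 : 3 ∈ s := mem_filter.mpr ⟨mem_range.mpr (by omega), Nat.prime_three, by decide⟩
  have hlarge : ∀ p ∈ s.erase 3, p.Prime ∧ 5 ≤ p := by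
    intro p hp
    obtain ⟨hp3, -, hprime, k, rfl⟩ := by simpa [s] using hp
    exact ⟨hprime, by have := hprime.two_le; omega⟩
  have hW24 : W = 24 * ∏ p ∈ s.erase 3, p := by
    rw [hW, ← mul_prod_erase s (fun p => p) h3]
    ring
  have hW1 : 1 < W := by
    have := prod_pos fun p hp => (hlarge p hp).1.pos
    omega
  have h24 : IsSumOfUnitSquares 5 (N : ZMod 24) :=
    ⟨1, by rw [(ZMod.intCast_eq_intCast_iff _ _ 24).mpr hN]; simp⟩
  obtain ⟨u, hu⟩ := hW24 ▸ isSumOfUnitSquares_intCast_mul_prod_primes h24 (s.erase 3)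
    (fun p hp => (hlarge p hp).1) (fun p hp => (hlarge p hp).1.coprime_twentyFour (hlarge p hp).2)
    (fun p hp => have := Fact.mk (hlarge p hp).1; ZMod.isSumOfUnitSquares_five (hlarge p hp).2 _)
  refine ⟨fun i => ((u i : ZMod W) ^ 2).val, fun i => ZMod.val_unit_sq_spec hW1 (u i), ?_⟩
  rw [← ZMod.intCast_eq_intCast_iff, ← hu]
  have : NeZero W := ⟨by omega⟩
  push_cast
  simp [Fin.sum_univ_five]
end

section
/- Let a, b, v be positive integers with gcd(a,b) = 1, v | b, and b/v odd. Then there exists S ∈ {−1, 1}, depending only on a, b, v, such that for every positive integer c with gcd(c², b) = v, the Jacobi symbol satisfies (a·(c²/v) / (b/v)) = S. -/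
/-! If `gcd (c², b) = gcd (c₀², b) = v`, then `(c² / v) * (c₀² / v) = (c c₀ / v)²` is a square
coprime to `b / v`, so the two Jacobi symbols `(c² / v | b / v)` and `(c₀² / v | b / v)` have
product `1`; both being `±1`, they agree. -/

theorem jacobiSym_eq_of_mul_eq_sq {x y z : ℤ} {n : ℕ} (hxy : x * y = z ^ 2)
    (hz : z.gcd n = 1) : jacobiSym x n = jacobiSym y n := by
  have hx : x.gcd n = 1 := by
    rw [← Int.isCoprime_iff_gcd_eq_one] at hz ⊢
    exact IsCoprime.of_mul_left_left (hxy ▸ hz.pow_left)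
  have hprod : jacobiSym x n * jacobiSym y n = 1 := by
    rw [← jacobiSym.mul_left, hxy, jacobiSym.sq_one' hz]
  calc jacobiSym x n = jacobiSym x n * (jacobiSym x n * jacobiSym y n) := by rw [hprod, mul_one]
    _ = jacobiSym x n ^ 2 * jacobiSym y n := by ring
    _ = jacobiSym y n := by rw [jacobiSym.sq_one hx, one_mul]

namespace Nat

theorem coprime_sq_div_gcd_div_gcd {b c : ℕ} (hc : 0 < c) :
    Coprime (c ^ 2 / gcd (c ^ 2) b) (b / gcd (c ^ 2) b) :=
  coprime_div_gcd_div_gcd (gcd_pos_of_pos_left b (by positivity))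

theorem sq_div_mul_sq_div {v c d : ℕ} (hc : v ∣ c ^ 2) (hd : v ∣ d ^ 2) :
    c ^ 2 / v * (d ^ 2 / v) = (c * d / v) ^ 2 := by
  have hcd : v ∣ c * d := by
    rw [← Nat.pow_dvd_pow_iff two_ne_zero, mul_pow, sq]
    exact mul_dvd_mul hc hd
  rw [div_mul_div_comm hc hd, Nat.div_pow hcd, mul_pow, ← sq]

end Nat

theorem jacobi_indep_of_c_general (a b v : ℕ)
    (hab : Nat.Coprime a b) :
    ∃ S : ℤ, (S = 1 ∨ S = -1) ∧
      ∀ c : ℕ, 0 < c → Nat.gcd (c ^ 2) b = v →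
        jacobiSym (a * (c ^ 2 / v)) (b / v) = S := by
  by_cases hex : ∃ c₀ : ℕ, 0 < c₀ ∧ Nat.gcd (c₀ ^ 2) b = v
  swap
  · exact ⟨1, Or.inl rfl, fun c hc hg => absurd ⟨c, hc, hg⟩ hex⟩
  obtain ⟨c₀, hc₀, hg₀⟩ := hex
  have han : Nat.Coprime a (b / v) :=
    hab.coprime_dvd_right (Nat.div_dvd_of_dvd (hg₀ ▸ Nat.gcd_dvd_right _ _))
  have hc₀v : Nat.Coprime (c₀ ^ 2 / v) (b / v) := hg₀ ▸ Nat.coprime_sq_div_gcd_div_gcd hc₀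
  refine ⟨jacobiSym (a * (c₀ ^ 2 / v)) (b / v), jacobiSym.eq_one_or_neg_one ?_,
    fun c hc hg => ?_⟩
  · exact_mod_cast han.mul_left hc₀v
  have hcv : Nat.Coprime (c ^ 2 / v) (b / v) := hg ▸ Nat.coprime_sq_div_gcd_div_gcd hc
  have hsq := Nat.sq_div_mul_sq_div (hg ▸ Nat.gcd_dvd_left (c ^ 2) b)
    (hg₀ ▸ Nat.gcd_dvd_left (c₀ ^ 2) b)
  have hcc₀ : Nat.Coprime (c * c₀ / v) (b / v) :=
    (Nat.coprime_pow_left_iff two_pos _ _).mp (hsq ▸ hcv.mul_left hc₀v)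
  have hprod : a * (c ^ 2 / v) * (a * (c₀ ^ 2 / v)) = (a * (c * c₀ / v)) ^ 2 := by
    rw [mul_pow, ← hsq]; ring
  -- the quotients in the statement are taken in `ℤ`; `exact_mod_cast` identifies them with `ℕ`'s
  exact jacobiSym_eq_of_mul_eq_sq (z := (a * (c * c₀ / v) : ℕ)) (by exact_mod_cast hprod)
    (by exact_mod_cast han.mul_left hcc₀)

theorem jacobi_indep_of_c (a b v : ℕ) (ha : 0 < a) (hb : 0 < b) (hv : 0 < v)
    (hab : Nat.Coprime a b) (hvb : v ∣ b) (hodd : Odd (b / v)) :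
    ∃ S : ℤ, (S = 1 ∨ S = -1) ∧
      ∀ c : ℕ, 0 < c → Nat.gcd (c ^ 2) b = v →
        jacobiSym (a * (c ^ 2 / v)) (b / v) = S :=
  jacobi_indep_of_c_general a b v hab
end
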